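/- arXiv:2011.12751 — 2 statements merged into one kernel-verified Lean document; each statement's English description precedes it below -/
import Mathlib

section
/- Mediation formula (one mediator, discrete case): suppose X, A, M, Y are discrete random variables with all relevant conditional probabilities positive, and potential outcomes Y(a,m), M(a) satisfy: (i) consistency (M = M(a) on {A = a}, Y = Y(a,m) on {A = a, M = m}); (ii) (M(a₁), Y(a,m)) ⫫ A | X for all a, a₁, m; (iii) Y(a,m) ⫫ M(a₁) | (X, A) for all a, a₁, m. Then E[Y(a, M(a₁))] = Σ_x Σ_m E[Y | X = x, A = a, M = m] · P(M = m | X = x, A = a₁) · P(X = x). -/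
open Finset

variable {Ω : Type*}

/-- Probability of the event `s` under the weight function `w` on a finite sample space. -/
noncomputable def Pr [Fintype Ω] (w : Ω → ℝ) (s : Set Ω) : ℝ :=
  ∑ ω, Set.indicator s w ω

/-- Conditional probability of `s` given `t`. -/
noncomputable def cPr [Fintype Ω] (w : Ω → ℝ) (s t : Set Ω) : ℝ :=
  Pr w (s ∩ t) / Pr w t

/-- Conditional expectation of `Y` given the event `t`. -/
noncomputable def cExp [Fintype Ω] (w : Ω → ℝ) (Y : Ω → ℝ) (t : Set Ω) : ℝ :=
  (∑ ω, Set.indicator t (fun ω' => w ω' * Y ω') ω) / Pr w t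

/-- Discrete conditional independence of `U` and `V` given `C`:
`P(U = u, V = v, C = c) · P(C = c) = P(U = u, C = c) · P(V = v, C = c)` for all values. -/
def DCondIndep [Fintype Ω] {α β γ : Type*} (w : Ω → ℝ)
    (U : Ω → α) (V : Ω → β) (C : Ω → γ) : Prop :=
  ∀ (u : α) (v : β) (c : γ),
    Pr w {ω | U ω = u ∧ V ω = v ∧ C ω = c} * Pr w {ω | C ω = c} =
      Pr w {ω | U ω = u ∧ C ω = c} * Pr w {ω | V ω = v ∧ C ω = c}

lemma Pr_congr [Fintype Ω] (w : Ω → ℝ) {s t : Set Ω} (h : ∀ ω, ω ∈ s ↔ ω ∈ t) :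
    Pr w s = Pr w t := by rw [Set.ext h]

lemma Pr_nonneg' [Fintype Ω] {w : Ω → ℝ} (hw : ∀ ω, 0 ≤ w ω) (s : Set Ω) :
    0 ≤ Pr w s :=
  Finset.sum_nonneg fun ω _ => Set.indicator_nonneg (fun a _ => hw a) ω

lemma Pr_zero [Fintype Ω] {w : Ω → ℝ} {P : Ω → Prop}
    (h : ∀ ω, P ω → w ω = 0) : Pr w {ω | P ω} = 0 := by
  classical
  apply Finset.sum_eq_zero
  intro ω _
  by_cases hp : P ω
  · simp [Set.indicator_apply, hp, h ω hp]
  · simp [Set.indicator_apply, hp]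

lemma w_eq_zero [Fintype Ω] {w : Ω → ℝ} (hw : ∀ ω, 0 ≤ w ω) {P : Ω → Prop}
    (h : Pr w {ω | P ω} = 0) : ∀ ω, P ω → w ω = 0 := by
  classical
  intro ω hp
  have hnn : ∀ i ∈ Finset.univ (α := Ω), 0 ≤ Set.indicator {ω | P ω} w i :=
    fun i _ => Set.indicator_nonneg (fun a _ => hw a) i
  have := (Finset.sum_eq_zero_iff_of_nonneg hnn).mp h ω (Finset.mem_univ ω)
  simpa [Set.indicator_apply, hp] using this

lemma ind_sum_zero [Fintype Ω] {P : Ω → Prop} (g : Ω → ℝ)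
    (h : ∀ ω, P ω → g ω = 0) : ∑ ω, Set.indicator {ω | P ω} g ω = 0 := by
  classical
  apply Finset.sum_eq_zero
  intro ω _
  by_cases hp : P ω
  · simp [Set.indicator_apply, hp, h ω hp]
  · simp [Set.indicator_apply, hp]

lemma slice_sum [Fintype Ω] (w f : Ω → ℝ) (P : Ω → Prop) (φ : ℝ → ℝ) :
    ∑ y ∈ Finset.image f Finset.univ, φ y * Pr w {ω | f ω = y ∧ P ω}
      = ∑ ω, Set.indicator {ω | P ω} (fun ω' => φ (f ω') * w ω') ω := by
  classical
  have e1 : ∀ ω, Set.indicator {ω | P ω} (fun ω' => φ (f ω') * w ω') ω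
      = if P ω then φ (f ω) * w ω else 0 := fun ω => by
    by_cases hp : P ω <;> simp [Set.indicator_apply, hp]
  have e2 : ∀ y, Pr w {ω | f ω = y ∧ P ω}
      = ∑ ω, if f ω = y ∧ P ω then w ω else 0 := fun y => by
    refine Finset.sum_congr rfl fun ω _ => ?_
    by_cases hp : f ω = y ∧ P ω <;> simp [Set.indicator_apply, hp]
  simp_rw [e1, e2, Finset.mul_sum]
  rw [Finset.sum_comm]
  refine Finset.sum_congr rfl fun ω _ => ?_
  rw [Finset.sum_eq_single (f ω)]
  · by_cases h : P ω <;> simp [h]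
  · intro y _ hy
    have : ¬ (f ω = y ∧ P ω) := fun hc => hy (hc.1.symm)
    simp [this]
  · intro h; exact absurd (Finset.mem_image_of_mem f (Finset.mem_univ ω)) h

lemma slice_ident [Fintype Ω] (w f : Ω → ℝ) (P Q : Ω → Prop) (c d : ℝ) (φ : ℝ → ℝ)
    (h : ∀ y : ℝ, Pr w {ω | f ω = y ∧ P ω} * c = Pr w {ω | f ω = y ∧ Q ω} * d) :
    (∑ ω, Set.indicator {ω | P ω} (fun ω' => φ (f ω') * w ω') ω) * c
      = (∑ ω, Set.indicator {ω | Q ω} (fun ω' => φ (f ω') * w ω') ω) * d := by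
  rw [← slice_sum w f P φ, ← slice_sum w f Q φ, Finset.sum_mul, Finset.sum_mul]
  refine Finset.sum_congr rfl fun y _ => ?_
  rw [mul_assoc, mul_assoc, h y]

lemma slice_ident_Pr [Fintype Ω] (w f : Ω → ℝ) (P Q : Ω → Prop) (c d : ℝ)
    (h : ∀ y : ℝ, Pr w {ω | f ω = y ∧ P ω} * c = Pr w {ω | f ω = y ∧ Q ω} * d) :
    Pr w {ω | P ω} * c = Pr w {ω | Q ω} * d := by
  have h2 := slice_ident w f P Q c d (fun _ => 1) h
  have e : ∀ (R : Ω → Prop),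
      (∑ ω, Set.indicator {ω | R ω} (fun ω' => (fun _ : ℝ => (1:ℝ)) (f ω') * w ω') ω)
        = Pr w {ω | R ω} := by
    intro R
    refine Finset.sum_congr rfl fun ω _ => ?_
    classical
    by_cases hr : R ω <;> simp [Set.indicator_apply, hr]
  rw [e P, e Q] at h2
  exact h2

/-- Mediation formula for a single mediator (discrete case): under consistency,
conditional independence, and positivity,
`E[Y(a, M(a₁))] = Σ_x Σ_m E[Y | x, a, m] P(M = m | x, a₁) P(X = x)`. -/
theorem mediation_formula_one_mediator [Fintype Ω] {χ σM : Type*} [Fintype χ] [Fintype σM]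
    (w : Ω → ℝ) (hw : ∀ ω, 0 ≤ w ω) (hw1 : ∑ ω, w ω = 1)
    (X : Ω → χ) (A : Ω → Bool) (M : Ω → σM) (Y : Ω → ℝ)
    (Ypo : Bool → σM → Ω → ℝ) (Mpo : Bool → Ω → σM)
    -- consistency
    (hconsM : ∀ (ω : Ω) (b : Bool), A ω = b → Mpo b ω = M ω)
    (hconsY : ∀ (ω : Ω) (b : Bool) (m : σM), A ω = b → M ω = m → Ypo b m ω = Y ω)
    -- conditional independence: (M(a₁), Y(a,m)) ⫫ A | X
    (hci1 : ∀ (b b₁ : Bool) (m : σM), DCondIndep w (fun ω => (Mpo b₁ ω, Ypo b m ω)) A X)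
    -- conditional independence: Y(a,m) ⫫ M(a₁) | (X, A)
    (hci2 : ∀ (b b₁ : Bool) (m : σM), DCondIndep w (Ypo b m) (Mpo b₁) (fun ω => (X ω, A ω)))
    -- positivity
    (hposA : ∀ (b : Bool) (x : χ), 0 < Pr w {ω | X ω = x} →
      0 < Pr w {ω | A ω = b ∧ X ω = x})
    (hposAM : ∀ (b : Bool) (x : χ) (m : σM), 0 < Pr w {ω | X ω = x ∧ M ω = m} →
      0 < Pr w {ω | A ω = b ∧ X ω = x ∧ M ω = m})
    (a a₁ : Bool) :
    ∑ ω, w ω * Ypo a (Mpo a₁ ω) ω =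
      ∑ x : χ, ∑ m : σM,
        cExp w Y {ω | X ω = x ∧ A ω = a ∧ M ω = m} *
          cPr w {ω | M ω = m} {ω | X ω = x ∧ A ω = a₁} * Pr w {ω | X ω = x} := by
  classical
  have key : ∀ (x : χ) (m : σM),
      (∑ ω, Set.indicator {ω' | Mpo a₁ ω' = m ∧ X ω' = x}
          (fun ω' => Ypo a m ω' * w ω') ω)
        = cExp w Y {ω | X ω = x ∧ A ω = a ∧ M ω = m} *
            cPr w {ω | M ω = m} {ω | X ω = x ∧ A ω = a₁} * Pr w {ω | X ω = x} := by
    intro x m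
    set Nx := Pr w {ω | X ω = x} with hNxdef
    set Nxa := Pr w {ω | A ω = a ∧ X ω = x} with hNxadef
    set Nxa1 := Pr w {ω | X ω = x ∧ A ω = a₁} with hNxa1def
    set PM := Pr w {ω | X ω = x ∧ A ω = a ∧ M ω = m} with hPMdef
    set Pm1 := Pr w {ω | M ω = m ∧ X ω = x ∧ A ω = a₁} with hPm1def
    set G1 := Pr w {ω | Mpo a₁ ω = m ∧ X ω = x} with hG1def
    set G2 := Pr w {ω | Mpo a₁ ω = m ∧ A ω = a ∧ X ω = x} with hG2def
    set EY := ∑ ω, Set.indicator {ω' | M ω' = m ∧ A ω' = a ∧ X ω' = x}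
        (fun ω' => Y ω' * w ω') ω with hEYdef
    set T1 := ∑ ω, Set.indicator {ω' | Mpo a₁ ω' = m ∧ X ω' = x}
        (fun ω' => Ypo a m ω' * w ω') ω with hT1def
    set T2 := ∑ ω, Set.indicator {ω' | Mpo a₁ ω' = m ∧ A ω' = a ∧ X ω' = x}
        (fun ω' => Ypo a m ω' * w ω') ω with hT2def
    set T3 := ∑ ω, Set.indicator {ω' | M ω' = m ∧ A ω' = a ∧ X ω' = x}
        (fun ω' => Ypo a m ω' * w ω') ω with hT3def
    set E2 := ∑ ω, Set.indicator {ω' | A ω' = a ∧ X ω' = x}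
        (fun ω' => Ypo a m ω' * w ω') ω with hE2def
    -- rewrite cExp and cPr
    have hcE : cExp w Y {ω | X ω = x ∧ A ω = a ∧ M ω = m} = EY / PM := by
      unfold cExp
      rw [← hPMdef]
      congr 1
      rw [hEYdef]
      refine Finset.sum_congr rfl fun ω _ => ?_
      by_cases hmem : X ω = x ∧ A ω = a ∧ M ω = m
      · have h2 : M ω = m ∧ A ω = a ∧ X ω = x := ⟨hmem.2.2, hmem.2.1, hmem.1⟩
        simp [Set.indicator_apply, hmem, h2, mul_comm]
      · have h2 : ¬(M ω = m ∧ A ω = a ∧ X ω = x) := fun hc => hmem ⟨hc.2.2, hc.2.1, hc.1⟩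
        simp [Set.indicator_apply, hmem, h2]
    have hcP : cPr w {ω | M ω = m} {ω | X ω = x ∧ A ω = a₁} = Pm1 / Nxa1 := by
      unfold cPr
      have e : Pr w ({ω | M ω = m} ∩ {ω | X ω = x ∧ A ω = a₁}) = Pm1 := by
        rw [hPm1def]
        apply Pr_congr
        intro ω
        simp only [Set.mem_inter_iff, Set.mem_setOf_eq]
      rw [e, ← hNxa1def]
    rw [hcE, hcP]
    -- independence equations from hci1
    have h1 : ∀ b' : Bool, ∀ y : ℝ,
        Pr w {ω | Ypo a m ω = y ∧ (Mpo a₁ ω = m ∧ A ω = b' ∧ X ω = x)} * Nx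
          = Pr w {ω | Ypo a m ω = y ∧ (Mpo a₁ ω = m ∧ X ω = x)}
              * Pr w {ω | A ω = b' ∧ X ω = x} := by
      intro b' y
      have h := hci1 a a₁ m (m, y) b' x
      have e1 : {ω | (Mpo a₁ ω, Ypo a m ω) = (m, y) ∧ A ω = b' ∧ X ω = x}
          = {ω | Ypo a m ω = y ∧ (Mpo a₁ ω = m ∧ A ω = b' ∧ X ω = x)} := by
        ext ω; simp only [Set.mem_setOf_eq, Prod.mk.injEq]; tauto
      have e2 : {ω | (Mpo a₁ ω, Ypo a m ω) = (m, y) ∧ X ω = x}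
          = {ω | Ypo a m ω = y ∧ (Mpo a₁ ω = m ∧ X ω = x)} := by
        ext ω; simp only [Set.mem_setOf_eq, Prod.mk.injEq]; tauto
      rw [e1, e2] at h
      exact h
    have hE1 : T2 * Nx = T1 * Nxa := by
      rw [hT1def, hT2def]
      exact slice_ident w (Ypo a m) _ _ Nx Nxa (fun y => y) (h1 a)
    have hE5 : G2 * Nx = G1 * Nxa := by
      rw [hG1def, hG2def]
      exact slice_ident_Pr w (Ypo a m) _ _ Nx Nxa (h1 a)
    have eA1 : Pr w {ω | A ω = a₁ ∧ X ω = x} = Nxa1 := by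
      rw [hNxa1def]; apply Pr_congr; intro ω
      simp only [Set.mem_setOf_eq]; tauto
    have eG3 : Pr w {ω | Mpo a₁ ω = m ∧ A ω = a₁ ∧ X ω = x} = Pm1 := by
      rw [hPm1def]; apply Pr_congr; intro ω
      simp only [Set.mem_setOf_eq]
      constructor
      · rintro ⟨hg, hA, hX⟩
        exact ⟨(hconsM ω a₁ hA).symm.trans hg, hX, hA⟩
      · rintro ⟨hM, hX, hA⟩
        exact ⟨(hconsM ω a₁ hA).trans hM, hA, hX⟩
    have hE6 : Pm1 * Nx = G1 * Nxa1 := by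
      have h := slice_ident_Pr w (Ypo a m) _ _ Nx (Pr w {ω | A ω = a₁ ∧ X ω = x}) (h1 a₁)
      rw [eG3, eA1] at h
      rw [← hG1def] at h
      exact h
    -- hci2 based
    have h2 : ∀ y : ℝ,
        Pr w {ω | Ypo a m ω = y ∧ (Mpo a₁ ω = m ∧ A ω = a ∧ X ω = x)} * Nxa
          = Pr w {ω | Ypo a m ω = y ∧ (A ω = a ∧ X ω = x)} * G2 := by
      intro y
      have h := hci2 a a₁ m y m (x, a)
      have e1 : {ω | Ypo a m ω = y ∧ Mpo a₁ ω = m ∧ (X ω, A ω) = (x, a)}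
          = {ω | Ypo a m ω = y ∧ (Mpo a₁ ω = m ∧ A ω = a ∧ X ω = x)} := by
        ext ω; simp only [Set.mem_setOf_eq, Prod.mk.injEq]; tauto
      have e2 : {ω | (X ω, A ω) = (x, a)} = {ω | A ω = a ∧ X ω = x} := by
        ext ω; simp only [Set.mem_setOf_eq, Prod.mk.injEq]; tauto
      have e3 : {ω | Ypo a m ω = y ∧ (X ω, A ω) = (x, a)}
          = {ω | Ypo a m ω = y ∧ (A ω = a ∧ X ω = x)} := by
        ext ω; simp only [Set.mem_setOf_eq, Prod.mk.injEq]; tauto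
      have e4 : {ω | Mpo a₁ ω = m ∧ (X ω, A ω) = (x, a)}
          = {ω | Mpo a₁ ω = m ∧ A ω = a ∧ X ω = x} := by
        ext ω; simp only [Set.mem_setOf_eq, Prod.mk.injEq]; tauto
      simp only [] at h
      rw [e1, e2, e3, e4] at h
      rw [← hNxadef, ← hG2def] at h
      exact h
    have hE2 : T2 * Nxa = E2 * G2 := by
      rw [hT2def, hE2def]
      exact slice_ident w (Ypo a m) _ _ Nxa G2 (fun y => y) h2
    have h3 : ∀ y : ℝ,
        Pr w {ω | Ypo a m ω = y ∧ (M ω = m ∧ A ω = a ∧ X ω = x)} * Nxa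
          = Pr w {ω | Ypo a m ω = y ∧ (A ω = a ∧ X ω = x)} * PM := by
      intro y
      have h := hci2 a a m y m (x, a)
      have e1 : {ω | Ypo a m ω = y ∧ Mpo a ω = m ∧ (X ω, A ω) = (x, a)}
          = {ω | Ypo a m ω = y ∧ (M ω = m ∧ A ω = a ∧ X ω = x)} := by
        ext ω; simp only [Set.mem_setOf_eq, Prod.mk.injEq]
        constructor
        · rintro ⟨hy, hg, hX, hA⟩
          exact ⟨hy, (hconsM ω a hA).symm.trans hg, hA, hX⟩
        · rintro ⟨hy, hM, hA, hX⟩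
          exact ⟨hy, (hconsM ω a hA).trans hM, hX, hA⟩
      have e2 : {ω | (X ω, A ω) = (x, a)} = {ω | A ω = a ∧ X ω = x} := by
        ext ω; simp only [Set.mem_setOf_eq, Prod.mk.injEq]; tauto
      have e3 : {ω | Ypo a m ω = y ∧ (X ω, A ω) = (x, a)}
          = {ω | Ypo a m ω = y ∧ (A ω = a ∧ X ω = x)} := by
        ext ω; simp only [Set.mem_setOf_eq, Prod.mk.injEq]; tauto
      have e4 : {ω | Mpo a ω = m ∧ (X ω, A ω) = (x, a)}
          = {ω | X ω = x ∧ A ω = a ∧ M ω = m} := by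
        ext ω; simp only [Set.mem_setOf_eq, Prod.mk.injEq]
        constructor
        · rintro ⟨hg, hX, hA⟩
          exact ⟨hX, hA, (hconsM ω a hA).symm.trans hg⟩
        · rintro ⟨hX, hA, hM⟩
          exact ⟨(hconsM ω a hA).trans hM, hX, hA⟩
      simp only [] at h
      rw [e1, e2, e3, e4] at h
      rw [← hNxadef, ← hPMdef] at h
      exact h
    have hE3 : T3 * Nxa = E2 * PM := by
      rw [hT3def, hE2def]
      exact slice_ident w (Ypo a m) _ _ Nxa PM (fun y => y) h3
    have hE4 : T3 = EY := by
      rw [hT3def, hEYdef]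
      refine Finset.sum_congr rfl fun ω _ => ?_
      by_cases hp : M ω = m ∧ A ω = a ∧ X ω = x
      · simp [Set.indicator_apply, hp, hconsY ω a m hp.2.1 hp.1]
      · simp [Set.indicator_apply, hp]
    rw [hE4] at hE3
    -- case analysis
    have hNxnn : 0 ≤ Nx := by rw [hNxdef]; exact Pr_nonneg' hw _
    rcases hNxnn.eq_or_lt with hNx0 | hNxpos
    · -- P(X = x) = 0
      have hPr0 : Pr w {ω | X ω = x} = 0 := by rw [← hNxdef]; exact hNx0.symm
      have hz : ∀ ω, X ω = x → w ω = 0 := w_eq_zero hw hPr0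
      have hT1z : T1 = 0 := by
        rw [hT1def]; exact ind_sum_zero _ fun ω h => by simp [hz ω h.2]
      rw [hT1z, ← hNx0]
      ring
    · -- P(X = x) > 0
      have hPrpos : 0 < Pr w {ω | X ω = x} := by rw [← hNxdef]; exact hNxpos
      have hNxapos : 0 < Nxa := by rw [hNxadef]; exact hposA a x hPrpos
      have hNxa1pos : 0 < Nxa1 := by rw [← eA1]; exact hposA a₁ x hPrpos
      rcases (Pr_nonneg' hw {ω | X ω = x ∧ M ω = m}).eq_or_lt with hxm0 | hxmpos
      · -- P(X = x, M = m) = 0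
        have hz : ∀ ω, X ω = x ∧ M ω = m → w ω = 0 := w_eq_zero hw hxm0.symm
        have hEYz : EY = 0 := by
          rw [hEYdef]
          exact ind_sum_zero _ fun ω h => by simp [hz ω ⟨h.2.2, h.1⟩]
        have hPm1z : Pm1 = 0 := by
          rw [hPm1def]; exact Pr_zero fun ω h => hz ω ⟨h.2.1, h.1⟩
        have hG1z : G1 = 0 := by
          rw [hPm1z, zero_mul] at hE6
          exact (mul_eq_zero.mp hE6.symm).resolve_right hNxa1pos.ne'
        have hG2z : G2 = 0 := by
          rw [hG1z, zero_mul] at hE5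
          exact (mul_eq_zero.mp hE5).resolve_right hNxpos.ne'
        have hT2z : T2 = 0 := by
          rw [hG2z, mul_zero] at hE2
          exact (mul_eq_zero.mp hE2).resolve_right hNxapos.ne'
        have hT1z : T1 = 0 := by
          rw [hT2z, zero_mul] at hE1
          exact (mul_eq_zero.mp hE1.symm).resolve_right hNxapos.ne'
        rw [hT1z, hEYz]
        simp
      · -- P(X = x, M = m) > 0
        have ePM : Pr w {ω | A ω = a ∧ X ω = x ∧ M ω = m} = PM := by
          rw [hPMdef]; apply Pr_congr; intro ω
          simp only [Set.mem_setOf_eq]; tauto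
        have hPMpos : 0 < PM := by rw [← ePM]; exact hposAM a x m hxmpos
        have d1 : G1 = Pm1 * Nx / Nxa1 := by
          rw [eq_div_iff hNxa1pos.ne']; linarith [hE6]
        have d2 : G2 = G1 * Nxa / Nx := by
          rw [eq_div_iff hNxpos.ne']; linarith [hE5]
        have d3 : E2 = EY * Nxa / PM := by
          rw [eq_div_iff hPMpos.ne']; linarith [hE3]
        have d4 : T2 = E2 * G2 / Nxa := by
          rw [eq_div_iff hNxapos.ne']; linarith [hE2]
        have d5 : T1 = T2 * Nx / Nxa := by
          rw [eq_div_iff hNxapos.ne']; linarith [hE1]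
        rw [d5, d4, d3, d2, d1]
        field_simp
  -- outer decomposition
  have h1 : ∀ ω, w ω * Ypo a (Mpo a₁ ω) ω
      = ∑ x : χ, ∑ m : σM, Set.indicator {ω' | Mpo a₁ ω' = m ∧ X ω' = x}
          (fun ω' => Ypo a m ω' * w ω') ω := by
    intro ω
    have e1 : ∀ (x : χ) (m : σM), Set.indicator {ω' | Mpo a₁ ω' = m ∧ X ω' = x}
        (fun ω' => Ypo a m ω' * w ω') ω
          = if Mpo a₁ ω = m ∧ X ω = x then Ypo a m ω * w ω else 0 := fun x m => by
      by_cases hp : Mpo a₁ ω = m ∧ X ω = x <;> simp [Set.indicator_apply, hp]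
    simp_rw [e1, ite_and]
    rw [Finset.sum_comm]
    simp [Finset.sum_ite_eq, mul_comm]
  calc ∑ ω, w ω * Ypo a (Mpo a₁ ω) ω
      = ∑ ω, ∑ x : χ, ∑ m : σM, Set.indicator {ω' | Mpo a₁ ω' = m ∧ X ω' = x}
          (fun ω' => Ypo a m ω' * w ω') ω :=
        Finset.sum_congr rfl fun ω _ => h1 ω
    _ = ∑ x : χ, ∑ m : σM, ∑ ω, Set.indicator {ω' | Mpo a₁ ω' = m ∧ X ω' = x}
          (fun ω' => Ypo a m ω' * w ω') ω := by
        rw [Finset.sum_comm]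
        exact Finset.sum_congr rfl fun x _ => Finset.sum_comm
    _ = _ := Finset.sum_congr rfl fun x _ => Finset.sum_congr rfl fun m _ => key x m
end

section
/- The efficient influence function has mean zero: with φ_{ā}(O) = Σ_{k=0}^{K+1} φ_k(O) where φ₀(O) = μ₀(X) − θ_{ā}, φ_k(O) = [1{A=a_k}/p(a_k|X)]∏_{j=1}^{k-1}[p(M_j|X,a_j,M̄_{j-1})/p(M_j|X,a_k,M̄_{j-1})](μ_k(X,M̄_k) − μ_{k-1}(X,M̄_{k-1})) for k ∈ [K], φ_{K+1}(O) = [1{A=a_{K+1}}/p(a_{K+1}|X)]∏_{j=1}^{K}[p(M_j|X,a_j,M̄_{j-1})/p(M_j|X,a_{K+1},M̄_{j-1})](Y − μ_K(X,M̄_K)), and θ_{ā} = E[μ₀(X)], one has E[φ_{ā}(O)] = 0. -/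
open Finset

variable {Ω : Type*}

/-- `π_j(a | X, M̄_j)`: conditional probability of treatment value `a` given the
covariates and the first `j` mediators (mediators are indexed `1, …, K`),
evaluated at the random point `ω`. -/
noncomputable def piProb [Fintype Ω] {χ α γ : Type*} (w : Ω → ℝ) (X : Ω → χ) (A : Ω → α)
    (M : ℕ → Ω → γ) (j : ℕ) (a : α) (ω : Ω) : ℝ :=
  cPr w {ω' | A ω' = a} {ω' | X ω' = X ω ∧ ∀ i ∈ Finset.Icc 1 j, M i ω' = M i ω}

/-- `p(M_j | X, a, M̄_{j-1})`: conditional probability of the `j`-th mediator value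
given the covariates, treatment value `a`, and the first `j-1` mediators,
evaluated at the random point `ω`. -/
noncomputable def fProb [Fintype Ω] {χ α γ : Type*} (w : Ω → ℝ) (X : Ω → χ) (A : Ω → α)
    (M : ℕ → Ω → γ) (j : ℕ) (a : α) (ω : Ω) : ℝ :=
  cPr w {ω' | M j ω' = M j ω}
    {ω' | X ω' = X ω ∧ A ω' = a ∧ ∀ i ∈ Finset.Icc 1 (j - 1), M i ω' = M i ω}

/-- Iterated outcome regressions: `muIter w X A M Y a K j` equals `μ_{K-j}`, where
`μ_K(X, M̄_K) = E[Y | X, a_{K+1}, M̄_K]` and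
`μ_k(X, M̄_k) = E[μ_{k+1}(X, M̄_{k+1}) | X, a_{k+1}, M̄_k]`. -/
noncomputable def muIter [Fintype Ω] {χ γ : Type*} (w : Ω → ℝ) (X : Ω → χ) (A : Ω → Bool)
    (M : ℕ → Ω → γ) (Y : Ω → ℝ) (a : ℕ → Bool) (K : ℕ) : ℕ → Ω → ℝ
  | 0, ω => cExp w Y
      {ω' | X ω' = X ω ∧ A ω' = a (K + 1) ∧ ∀ i ∈ Finset.Icc 1 K, M i ω' = M i ω}
  | j + 1, ω => cExp w (muIter w X A M Y a K j)
      {ω' | X ω' = X ω ∧ A ω' = a (K - j) ∧ ∀ i ∈ Finset.Icc 1 (K - j - 1), M i ω' = M i ω}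

lemma key_zero [Fintype Ω] (w : Ω → ℝ) (S : Ω → Set Ω) (h g : Ω → ℝ)
    (hS : ∀ ω ω', ω' ∈ S ω → S ω' = S ω)
    (hcell : ∀ ω ω', ω' ∈ S ω → ω ∈ S ω → h ω' = h ω)
    (h0 : ∀ ω, ω ∉ S ω → h ω = 0)
    (hpos : ∀ ω, Pr w (S ω) ≠ 0) :
    ∑ ω, w ω * (h ω * (g ω - cExp w g (S ω))) = 0 := by
  have key : ∀ ω', (∑ ω, w ω * h ω * (Set.indicator (S ω) (fun x => w x * g x) ω' / Pr w (S ω)))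
      = w ω' * (h ω' * g ω') := by
    intro ω'
    have hterm : ∀ ω, w ω * h ω * (Set.indicator (S ω) (fun x => w x * g x) ω' / Pr w (S ω))
        = Set.indicator (S ω') w ω * (h ω' * (w ω' * g ω') / Pr w (S ω')) := by
      intro ω
      by_cases hmem : ω ∈ S ω'
      · have hSeq : S ω = S ω' := hS ω' ω hmem
        rw [Set.indicator_of_mem hmem]
        by_cases hm' : ω' ∈ S ω'
        · have hω'Sω : ω' ∈ S ω := by rw [hSeq]; exact hm'
          have hωSω : ω ∈ S ω := by rw [hSeq]; exact hmem
          rw [Set.indicator_of_mem hω'Sω, hSeq, hcell ω ω' hω'Sω hωSω]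
          ring
        · have hω'Sω : ω' ∉ S ω := by rw [hSeq]; exact hm'
          rw [Set.indicator_of_notMem hω'Sω, h0 ω' hm']
          ring
      · rw [Set.indicator_of_notMem hmem]
        by_cases hm' : ω' ∈ S ω
        · have hSeq : S ω' = S ω := hS ω ω' hm'
          have : ω ∉ S ω := by rw [← hSeq]; exact hmem
          rw [h0 ω this]; ring
        · rw [Set.indicator_of_notMem hm']; ring
    rw [Finset.sum_congr rfl fun ω _ => hterm ω, ← Finset.sum_mul]
    by_cases hm' : ω' ∈ S ω'
    · have : (∑ ω, Set.indicator (S ω') w ω) = Pr w (S ω') := rfl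
      rw [this, mul_comm, div_mul_eq_mul_div, mul_div_assoc,
        div_self (hpos ω'), mul_one]
      ring
    · rw [h0 ω' hm']; ring
  have expand : ∀ ω, w ω * (h ω * (g ω - cExp w g (S ω)))
      = w ω * (h ω * g ω)
        - ∑ ω', w ω * h ω * (Set.indicator (S ω) (fun x => w x * g x) ω' / Pr w (S ω)) := by
    intro ω
    rw [cExp, show (∑ ω', w ω * h ω * (Set.indicator (S ω) (fun x => w x * g x) ω' / Pr w (S ω)))
        = w ω * h ω * ((∑ ω', Set.indicator (S ω) (fun x => w x * g x) ω') / Pr w (S ω)) from by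
      rw [← Finset.mul_sum, Finset.sum_div]]
    ring
  rw [Finset.sum_congr rfl fun ω _ => expand ω, Finset.sum_sub_distrib,
    Finset.sum_comm, Finset.sum_congr rfl fun ω' _ => key ω']
  simp

lemma piProb_congr [Fintype Ω] {χ α γ : Type*} {w : Ω → ℝ} {X : Ω → χ} {A : Ω → α}
    {M : ℕ → Ω → γ} {j : ℕ} {b : α} {ω ω' : Ω} (hX : X ω' = X ω)
    (hM : ∀ i ∈ Finset.Icc 1 j, M i ω' = M i ω) :
    piProb w X A M j b ω' = piProb w X A M j b ω := by
  unfold piProb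
  congr 1
  ext ω''
  simp only [Set.mem_setOf_eq, hX]
  constructor <;> rintro ⟨h1, h2⟩
  · exact ⟨h1, fun i hi => (h2 i hi).trans (hM i hi)⟩
  · exact ⟨h1, fun i hi => (h2 i hi).trans (hM i hi).symm⟩

lemma fProb_congr [Fintype Ω] {χ α γ : Type*} {w : Ω → ℝ} {X : Ω → χ} {A : Ω → α}
    {M : ℕ → Ω → γ} {j : ℕ} {b : α} {ω ω' : Ω} (hX : X ω' = X ω) (hMj : M j ω' = M j ω)
    (hM : ∀ i ∈ Finset.Icc 1 (j - 1), M i ω' = M i ω) :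
    fProb w X A M j b ω' = fProb w X A M j b ω := by
  unfold fProb
  congr 1
  · ext ω''
    simp only [Set.mem_setOf_eq, hMj]
  · ext ω''
    simp only [Set.mem_setOf_eq, hX]
    constructor <;> rintro ⟨h1, h2, h3⟩
    · exact ⟨h1, h2, fun i hi => (h3 i hi).trans (hM i hi)⟩
    · exact ⟨h1, h2, fun i hi => (h3 i hi).trans (hM i hi).symm⟩

lemma eif_term_zero [Fintype Ω] {χ γ : Type*} (w : Ω → ℝ) (X : Ω → χ) (A : Ω → Bool)
    (M : ℕ → Ω → γ) (g : Ω → ℝ) (n : ℕ) (b : Bool) (aa : ℕ → Bool)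
    (hpos : ∀ ω, 0 < piProb w X A M n b ω) :
    ∑ ω, w ω * ((if A ω = b then (1:ℝ) else 0) / piProb w X A M 0 b ω *
      (∏ j ∈ Finset.Icc 1 n, fProb w X A M j (aa j) ω / fProb w X A M j b ω) *
      (g ω - cExp w g {ω' | X ω' = X ω ∧ A ω' = b ∧ ∀ i ∈ Finset.Icc 1 n, M i ω' = M i ω})) = 0 := by
  have := key_zero w
    (fun ω => {ω' | X ω' = X ω ∧ A ω' = b ∧ ∀ i ∈ Finset.Icc 1 n, M i ω' = M i ω})
    (fun ω => (if A ω = b then (1:ℝ) else 0) / piProb w X A M 0 b ω *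
      ∏ j ∈ Finset.Icc 1 n, fProb w X A M j (aa j) ω / fProb w X A M j b ω)
    g ?_ ?_ ?_ ?_
  · exact this
  · -- hS
    rintro ω ω' ⟨hX, hA, hM⟩
    ext ω''
    simp only [Set.mem_setOf_eq, hX]
    constructor <;> rintro ⟨h1, h2, h3⟩
    · exact ⟨h1, h2, fun i hi => (h3 i hi).trans (hM i hi)⟩
    · exact ⟨h1, h2, fun i hi => (h3 i hi).trans (hM i hi).symm⟩
  · -- hcell
    rintro ω ω' ⟨hX, hA, hM⟩ ⟨_, hA2, _⟩
    simp only [hA, hA2, if_pos]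
    rw [piProb_congr hX (by simp)]
    congr 1
    refine Finset.prod_congr rfl fun j hj => ?_
    simp only [Finset.mem_Icc] at hj
    have hMsub : ∀ i ∈ Finset.Icc 1 (j - 1), M i ω' = M i ω := fun i hi => by
      simp only [Finset.mem_Icc] at hi
      exact hM i (Finset.mem_Icc.mpr ⟨hi.1, hi.2.trans ((Nat.sub_le j 1).trans hj.2)⟩)
    rw [fProb_congr hX (hM j (Finset.mem_Icc.mpr hj)) hMsub,
      fProb_congr hX (hM j (Finset.mem_Icc.mpr hj)) hMsub]
  · -- h0
    intro ω hω
    by_cases hA : A ω = b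
    · exact absurd ⟨rfl, hA, fun i _ => rfl⟩ hω
    · simp [hA]
  · -- hpos
    intro ω
    have hp := hpos ω
    rw [piProb, cPr] at hp
    intro h0
    have : Pr w ({ω' | A ω' = b} ∩ {ω' | X ω' = X ω ∧ ∀ i ∈ Finset.Icc 1 n, M i ω' = M i ω}) = 0 := by
      rw [← h0]
      congr 1
      ext ω''
      simp only [Set.mem_inter_iff, Set.mem_setOf_eq]
      tauto
    rw [this, zero_div] at hp
    exact lt_irrefl 0 hp

/-- The efficient influence function φ_{ā}(O) = Σ_{k=0}^{K+1} φ_k(O) has mean zero,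
where φ₀ = μ₀(X) − θ_{ā} with θ_{ā} = E[μ₀(X)], φ_k (k ∈ [K]) are the intermediate
weighted regression residuals, and φ_{K+1} is the terminal weighted outcome residual. -/
theorem eif_mean_zero [Fintype Ω] {χ γ : Type*}
    (w : Ω → ℝ) (hw : ∀ ω, 0 ≤ w ω) (hw1 : ∑ ω, w ω = 1)
    (X : Ω → χ) (A : Ω → Bool) (M : ℕ → Ω → γ) (Y : Ω → ℝ)
    (K : ℕ) (a : ℕ → Bool)
    (hπ : ∀ j ≤ K, ∀ (b : Bool) (ω : Ω), 0 < piProb w X A M j b ω)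
    (hf : ∀ j, 1 ≤ j → j ≤ K → ∀ (b : Bool) (ω : Ω), 0 < fProb w X A M j b ω) :
    ∑ ω, w ω *
      ((muIter w X A M Y a K K ω - ∑ ω', w ω' * muIter w X A M Y a K K ω')
        + (∑ k ∈ Finset.Icc 1 K,
            (if A ω = a k then (1 : ℝ) else 0) / piProb w X A M 0 (a k) ω *
              (∏ j ∈ Finset.Icc 1 (k - 1),
                fProb w X A M j (a j) ω / fProb w X A M j (a k) ω) *
              (muIter w X A M Y a K (K - k) ω - muIter w X A M Y a K (K - k + 1) ω))
        + (if A ω = a (K + 1) then (1 : ℝ) else 0) / piProb w X A M 0 (a (K + 1)) ω *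
            (∏ j ∈ Finset.Icc 1 K,
              fProb w X A M j (a j) ω / fProb w X A M j (a (K + 1)) ω) *
            (Y ω - muIter w X A M Y a K 0 ω))
      = 0 := by
  simp only [mul_add]
  rw [Finset.sum_add_distrib, Finset.sum_add_distrib]
  have h1 : ∑ ω, w ω * (muIter w X A M Y a K K ω - ∑ ω', w ω' * muIter w X A M Y a K K ω') = 0 := by
    simp only [mul_sub]
    rw [Finset.sum_sub_distrib, ← Finset.sum_mul, hw1, one_mul, sub_self]
  have h2 : ∑ ω, w ω * (∑ k ∈ Finset.Icc 1 K,
      (if A ω = a k then (1 : ℝ) else 0) / piProb w X A M 0 (a k) ω *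
        (∏ j ∈ Finset.Icc 1 (k - 1),
          fProb w X A M j (a j) ω / fProb w X A M j (a k) ω) *
        (muIter w X A M Y a K (K - k) ω - muIter w X A M Y a K (K - k + 1) ω)) = 0 := by
    simp only [Finset.mul_sum]
    rw [Finset.sum_comm]
    refine Finset.sum_eq_zero fun k hk => ?_
    obtain ⟨hk1, hkK⟩ := Finset.mem_Icc.mp hk
    have hmu : ∀ ω, muIter w X A M Y a K (K - k + 1) ω
        = cExp w (muIter w X A M Y a K (K - k))
          {ω' | X ω' = X ω ∧ A ω' = a k ∧ ∀ i ∈ Finset.Icc 1 (k - 1), M i ω' = M i ω} := by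
      intro ω
      have hsub : K - (K - k) = k := Nat.sub_sub_self hkK
      simp only [muIter]
      rw [hsub]
    rw [Finset.sum_congr rfl fun ω _ => by rw [hmu ω]]
    exact eif_term_zero w X A M (muIter w X A M Y a K (K - k)) (k - 1) (a k) a
      (fun ω => hπ (k - 1) ((Nat.sub_le k 1).trans hkK) (a k) ω)
  have h3 : ∑ ω, w ω * ((if A ω = a (K + 1) then (1 : ℝ) else 0) / piProb w X A M 0 (a (K + 1)) ω *
      (∏ j ∈ Finset.Icc 1 K, fProb w X A M j (a j) ω / fProb w X A M j (a (K + 1)) ω) *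
      (Y ω - muIter w X A M Y a K 0 ω)) = 0 := by
    have hmu : ∀ ω, muIter w X A M Y a K 0 ω
        = cExp w Y {ω' | X ω' = X ω ∧ A ω' = a (K + 1) ∧ ∀ i ∈ Finset.Icc 1 K, M i ω' = M i ω} :=
      fun ω => by simp only [muIter]
    rw [Finset.sum_congr rfl fun ω _ => by rw [hmu ω]]
    exact eif_term_zero w X A M Y K (a (K + 1)) a (fun ω => hπ K le_rfl (a (K + 1)) ω)
  rw [h1, h2, h3]
  norm_num
end
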